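/- Let n ≥ 1, k ≥ 1, let x : Fin n → ℝ be agents on the real line, and let α > 1 be a real number. Set β = max{1, 1/(α − 1)}. Then there exists a k-clustering Y : Fin k → ℝ that is an (α, β)-core clustering; that is, for every set S ⊆ Fin n with |S| ≥ α·n/k and every point y' ∈ ℝ, one has β·Σ_{i∈S} |x_i − y'| ≥ Σ_{i∈S} min_{j<k} |x_i − Y_j|. -/

import Mathlib

/-!
Place the `j`-th center at the empirical `(j+1)/k`-quantile of the agents. Fix a deviation
`(S, y')` and let `c` be the distance from `y'` to the nearest center. An agent `x` with a center
between `x` and `y'` pays at most `|x - y'| - c`; any other agent pays at most `|x - y'| + c`.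
The agents of the second kind have no center between any two of them, so by the choice of the
quantiles there are at most `n/k` of them. Since `|S| ≥ α n/k`, `S` holds at least `α - 1` times
as many agents of the first kind as of the second. Each agent of the first kind has
`|x - y'| ≥ c`, which pays for the surplus `c` of the second kind up to the factor
`max 1 (1/(α-1))`.
-/

/-- The cost of agent location `p` under the `k`-clustering `Y`:
the minimum distance from `p` to a center of `Y`. -/
noncomputable def clusterCost {X : Type*} [MetricSpace X] {k : ℕ} (Y : Fin k → X) (p : X) : ℝ :=
  sInf (Set.range fun j => dist p (Y j))

open Finset

section Metric

variable {X : Type*} [MetricSpace X] {k : ℕ} (Y : Fin k → X)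

theorem clusterCost_eq_infDist (p : X) : clusterCost Y p = Metric.infDist p (Set.range Y) := by
  rw [Metric.infDist_eq_iInf, iInf_range' (dist p) Y]
  rfl

theorem clusterCost_nonneg (p : X) : 0 ≤ clusterCost Y p := by
  rw [clusterCost_eq_infDist]
  exact Metric.infDist_nonneg

theorem clusterCost_le_dist_add (p q : X) : clusterCost Y p ≤ dist p q + clusterCost Y q := by
  simp only [clusterCost_eq_infDist]
  linarith [Metric.infDist_le_infDist_add_dist (s := Set.range Y) (x := p) (y := q)]

theorem clusterCost_le_dist_sub {p q : X} {j : Fin k}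
    (h : dist p (Y j) + dist (Y j) q = dist p q) :
    clusterCost Y p ≤ dist p q - clusterCost Y q := by
  simp only [clusterCost_eq_infDist]
  have hp := Metric.infDist_le_dist_of_mem (x := p) (Set.mem_range_self (f := Y) j)
  have hq := Metric.infDist_le_dist_of_mem (x := q) (Set.mem_range_self (f := Y) j)
  rw [dist_comm q] at hq
  linarith

end Metric

theorem sum_le_mul_sum_of_le_sub_of_le_add {ι : Type*} (S : Finset ι) (p : ι → Prop)
    [DecidablePred p] {f d : ι → ℝ} {c β : ℝ} (hβ : 1 ≤ β) (hc : 0 ≤ c)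
    (hf : ∀ i ∈ S, 0 ≤ f i) (hd : ∀ i ∈ S, 0 ≤ d i)
    (hp : ∀ i ∈ S, p i → f i ≤ d i - c) (hnp : ∀ i ∈ S, ¬p i → f i ≤ d i + c)
    (hcard : (#{i ∈ S | ¬p i} : ℝ) ≤ β * #{i ∈ S | p i}) :
    ∑ i ∈ S, f i ≤ β * ∑ i ∈ S, d i := by
  set P := {i ∈ S | p i}
  set G := {i ∈ S | ¬p i}
  have hfP : ∑ i ∈ P, f i ≤ ∑ i ∈ P, d i - #P * c := by
    rw [← nsmul_eq_mul, ← sum_const, ← sum_sub_distrib]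
    exact sum_le_sum fun i hi => hp i (mem_filter.1 hi).1 (mem_filter.1 hi).2
  have hfG : ∑ i ∈ G, f i ≤ ∑ i ∈ G, d i + #G * c := by
    rw [← nsmul_eq_mul, ← sum_const, ← sum_add_distrib]
    exact sum_le_sum fun i hi => hnp i (mem_filter.1 hi).1 (mem_filter.1 hi).2
  have hcP : #P * c ≤ ∑ i ∈ P, d i := by
    rw [← nsmul_eq_mul, ← sum_const]
    exact sum_le_sum fun i hi => by
      linarith [hf i (mem_filter.1 hi).1, hp i (mem_filter.1 hi).1 (mem_filter.1 hi).2]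
  have hdG : 0 ≤ ∑ i ∈ G, d i := sum_nonneg fun i hi => hd i (mem_filter.1 hi).1
  have hGc : #G * c ≤ β * (#P * c) := by
    rw [← mul_assoc]
    exact mul_le_mul_of_nonneg_right hcard hc
  rw [← sum_filter_add_sum_filter_not S p f, ← sum_filter_add_sum_filter_not S p d]
  nlinarith [mul_nonneg (sub_nonneg.2 hβ) hdG, mul_nonneg (sub_nonneg.2 hβ) (sub_nonneg.2 hcP)]

theorem le_max_one_one_div_sub_one_mul {g s m α : ℝ} (hα : 1 < α) (hg : 0 ≤ g) (hgm : g ≤ m)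
    (hm : α * m ≤ g + s) : g ≤ max 1 (1 / (α - 1)) * s := by
  have hα' : 0 < α - 1 := sub_pos.2 hα
  have hs : (α - 1) * g ≤ s := by linarith [mul_le_mul_of_nonneg_left hgm hα'.le]
  calc g ≤ 1 / (α - 1) * s := by rw [one_div_mul_eq_div, le_div_iff₀ hα']; linarith
    _ ≤ max 1 (1 / (α - 1)) * s :=
      mul_le_mul_of_nonneg_right (le_max_right _ _) ((mul_nonneg hα'.le hg).trans hs)

section Quantile

variable {n : ℕ} (x : Fin n → ℝ)

noncomputable def countLE (t : ℝ) : ℕ := #{i | x i ≤ t}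

/-- `t` is the lower `a/b`-quantile of the empirical distribution of `x`: the least position at
which at least a fraction `a/b` of the agents lie at or to the left. -/
def IsLowerQuantile (a b : ℕ) (t : ℝ) : Prop :=
  a * n ≤ b * countLE x t ∧ ∀ i, a * n ≤ b * countLE x (x i) → t ≤ x i

theorem exists_isLowerQuantile (hn : 0 < n) {a b : ℕ} (hab : a ≤ b) :
    ∃ t, IsLowerQuantile x a b t := by
  obtain ⟨imax, -, himax⟩ := (univ : Finset (Fin n)).exists_max_image x ⟨⟨0, hn⟩, mem_univ _⟩
  have hcount : countLE x (x imax) = n := by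
    rw [countLE, filter_true_of_mem fun i _ => himax i (mem_univ i), card_univ, Fintype.card_fin]
  obtain ⟨i, hi, hmin⟩ := ({i | a * n ≤ b * countLE x (x i)} : Finset (Fin n)).exists_min_image x
    ⟨imax, mem_filter.2 ⟨mem_univ _, hcount.symm ▸ Nat.mul_le_mul_right n hab⟩⟩
  exact ⟨x i, (mem_filter.1 hi).2, fun i' hi' => hmin i' (mem_filter.2 ⟨mem_univ _, hi'⟩)⟩

variable {k : ℕ} {Y : Fin k → ℝ}

theorem exists_quantile_mem_Icc (hY : ∀ j : Fin k, IsLowerQuantile x (j + 1) k (Y j)) (a : ℝ)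
    (i : Fin n) (h : n ≤ k * #{l | a ≤ x l ∧ x l ≤ x i}) : ∃ j, Y j ∈ Set.Icc a (x i) := by
  set N := #{l | x l < a}
  set M := #{l | a ≤ x l ∧ x l ≤ x i}
  have hn : 0 < n := i.pos
  have hM : 0 < M := Nat.pos_of_mul_pos_left (hn.trans_le h)
  have hk : 0 < k := Nat.pos_of_mul_pos_right (hn.trans_le h)
  have hai : a ≤ x i := by
    obtain ⟨l, hl⟩ := card_pos.1 hM
    exact (mem_filter.1 hl).2.1.trans (mem_filter.1 hl).2.2
  have hNM : N + M ≤ countLE x (x i) := by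
    rw [← card_union_of_disjoint (disjoint_filter.2 fun l _ h1 h2 => (not_lt.2 h2.1) h1)]
    refine card_le_card fun l hl => mem_filter.2 ⟨mem_univ l, ?_⟩
    rcases mem_union.1 hl with hl | hl
    · exact ((mem_filter.1 hl).2.trans_le hai).le
    · exact (mem_filter.1 hl).2.2
  have hle : countLE x (x i) ≤ n := (card_le_univ _).trans (Fintype.card_fin n).le
  -- `j` is the quantile level that the agents left of `a` fall short of
  set j := k * N / n
  have hj : j * n ≤ k * N := Nat.div_mul_le_self _ _
  have hj' : k * N < (j + 1) * n := (Nat.lt_mul_div_succ _ hn).trans_eq (mul_comm _ _)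
  have hjk : j < k :=
    Nat.lt_of_mul_lt_mul_right (hj.trans_lt (Nat.mul_lt_mul_of_pos_left (by omega) hk))
  refine ⟨⟨j, hjk⟩, ?_, (hY ⟨j, hjk⟩).2 i ?_⟩
  · by_contra hlt
    have hcount : countLE x (Y ⟨j, hjk⟩) ≤ N := card_le_card fun l hl =>
      mem_filter.2 ⟨mem_univ l, (mem_filter.1 hl).2.trans_lt (not_le.1 hlt)⟩
    exact hj'.not_ge ((hY ⟨j, hjk⟩).1.trans (Nat.mul_le_mul_left k hcount))
  · calc (j + 1) * n = j * n + n := by ring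
      _ ≤ k * N + k * M := add_le_add hj h
      _ = k * (N + M) := by ring
      _ ≤ k * countLE x (x i) := Nat.mul_le_mul_left k hNM

open Classical in
theorem card_mul_le_of_forall_notMem_uIcc (hY : ∀ j : Fin k, IsLowerQuantile x (j + 1) k (Y j))
    (y : ℝ) : k * #{i | ∀ j, Y j ∉ Set.uIcc (x i) y} ≤ n := by
  set G : Finset (Fin n) := {i | ∀ j, Y j ∉ Set.uIcc (x i) y}
  by_contra! h
  have hG : G.Nonempty := card_pos.1 (Nat.pos_of_mul_pos_left (n.zero_le.trans_lt h))
  obtain ⟨i₁, hi₁, hmin⟩ := G.exists_min_image x hG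
  obtain ⟨i₂, hi₂, hmax⟩ := G.exists_max_image x hG
  have hsub : G ⊆ ({l | x i₁ ≤ x l ∧ x l ≤ x i₂} : Finset (Fin n)) := fun l hl =>
    mem_filter.2 ⟨mem_univ _, hmin l hl, hmax l hl⟩
  obtain ⟨j, hj⟩ := exists_quantile_mem_Icc x hY (x i₁) i₂
    (h.le.trans (Nat.mul_le_mul_left k (card_le_card hsub)))
  rcases Set.uIcc_subset_uIcc_union_uIcc (b := y) (Set.Icc_subset_uIcc hj) with h₁ | h₂
  · exact (mem_filter.1 hi₁).2 j h₁
  · exact (mem_filter.1 hi₂).2 j (Set.uIcc_comm y (x i₂) ▸ h₂)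

end Quantile

theorem stmt17 {n k : ℕ} (hn : 0 < n) (hk : 0 < k) (x : Fin n → ℝ)
    (α : ℝ) (hα : 1 < α) :
    ∃ Y : Fin k → ℝ,
      ∀ S : Finset (Fin n), α * (n : ℝ) / (k : ℝ) ≤ S.card →
        ∀ y' : ℝ,
          ∑ i ∈ S, clusterCost Y (x i) ≤
            max 1 (1 / (α - 1)) * ∑ i ∈ S, |x i - y'| := by
  choose Y hY using fun j : Fin k => exists_isLowerQuantile x hn (Nat.succ_le_of_lt j.isLt)
  refine ⟨Y, fun S hS y' => ?_⟩
  classical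
  refine sum_le_mul_sum_of_le_sub_of_le_add S (fun i => ∃ j, Y j ∈ Set.uIcc (x i) y')
    (le_max_left _ _) (clusterCost_nonneg Y y') (fun i _ => clusterCost_nonneg Y (x i))
    (fun i _ => abs_nonneg _) ?_ (fun i _ _ => clusterCost_le_dist_add Y (x i) y') ?_
  · rintro i - ⟨j, hj⟩
    exact clusterCost_le_dist_sub Y
      (dist_add_dist_of_mem_segment ((segment_eq_uIcc (x i) y').symm ▸ hj))
  · have hfar : #{i ∈ S | ¬∃ j, Y j ∈ Set.uIcc (x i) y'} * k ≤ n :=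
      (Nat.mul_le_mul_right k (card_le_card fun i hi =>
        mem_filter.2 ⟨mem_univ i, not_exists.1 (mem_filter.1 hi).2⟩)).trans
        ((mul_comm _ _).trans_le (card_mul_le_of_forall_notMem_uIcc x hY y'))
    refine le_max_one_one_div_sub_one_mul hα (Nat.cast_nonneg _) (m := n / k) ?_ ?_
    · rw [le_div_iff₀ (by exact_mod_cast hk)]
      exact_mod_cast hfar
    · rw [← mul_div_assoc, ← Nat.cast_add, add_comm, card_filter_add_card_filter_not]
      exact hS
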